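/- arXiv:1511.07922 — 3 statements merged into one kernel-verified Lean document; each statement's English description precedes it below -/
import Mathlib

section
/- If T is a desingularized operator for L of order k ≥ r = deg_∂(L), then deg_x(lc_∂(T)) = min{ deg_x(lc_∂(Q)) : Q ∈ M_k(L), Q ≠ 0 }, i.e., among nonzero operators in the contraction ideal of order at most k, T has a leading coefficient of minimal x-degree. -/
open Polynomial

noncomputable section

/-- `Q_R(x)`, the field of rational functions over the fraction field `Q_R` of `R`,
realized as the fraction field of `R[x]`. -/
abbrev QX (R : Type) [CommRing R] [IsDomain R] := FractionRing (Polynomial R)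

/-- Data of an Ore algebra `R[x][∂; σ, δ] ⊆ Q_R(x)[∂; σ, δ]`.
The ring `A` plays the role of `Q_R(x)[∂]`; `ι` embeds the coefficient field,
`D` is the Ore variable `∂`, subject to the commutation rule `∂·p = σ(p)·∂ + δ(p)`,
and every element of `A` has a unique finite coefficient expansion `Σ ι(cᵢ)·∂^i`. -/
structure OreAlg (R : Type) [CommRing R] [IsDomain R] (A : Type) [Ring A] where
  σ : Polynomial R ≃+* Polynomial R
  σ_fix : ∀ r : R, σ (C r) = C r
  δ : Polynomial R → Polynomial R
  δ_add : ∀ f g, δ (f + g) = δ f + δ g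
  δ_linear : ∀ (r : R) (f), δ (C r * f) = C r * δ f
  ι : QX R →+* A
  ι_inj : Function.Injective ι
  D : A
  comm_rule : ∀ p : Polynomial R,
    D * ι (algebraMap (Polynomial R) (QX R) p)
      = ι (algebraMap (Polynomial R) (QX R) (σ p)) * D
        + ι (algebraMap (Polynomial R) (QX R) (δ p))
  δ_leibniz : ∀ f g, δ (f * g) = σ f * δ g + δ f * g
  coeff : A → ℕ → QX R
  coeff_inj : ∀ P Q : A, (∀ i, coeff P i = coeff Q i) → P = Q
  coeff_add : ∀ P Q i, coeff (P + Q) i = coeff P i + coeff Q i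
  coeff_smul : ∀ (f : QX R) (P : A) (i), coeff (ι f * P) i = f * coeff P i
  coeff_bdd : ∀ P : A, ∃ N, ∀ i, N < i → coeff P i = 0
  coeff_mk : ∀ (N : ℕ) (c : ℕ → QX R), (∀ i, N < i → c i = 0) →
    ∀ j, coeff (∑ i ∈ Finset.range (N + 1), ι (c i) * D ^ i) j = c j

namespace OreAlg

variable {R : Type} [CommRing R] [IsDomain R] {A : Type} [Ring A] (O : OreAlg R A)

/-- The embedding of `R[x]` into the Ore algebra. -/
def ιp (f : Polynomial R) : A := O.ι (algebraMap (Polynomial R) (QX R) f)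

/-- The `i`-th `∂`-coefficient of `P` lies in `R[x]`. -/
def PolyCoeff (P : A) (i : ℕ) : Prop :=
  ∃ f : Polynomial R, O.coeff P i = algebraMap (Polynomial R) (QX R) f

/-- `P` belongs to the subring `R[x][∂]` of `Q_R(x)[∂]`. -/
def InB (P : A) : Prop := ∀ i, O.PolyCoeff P i

/-- The order (degree in `∂`) of an operator. -/
def ord (P : A) : ℕ := sSup {i | O.coeff P i ≠ 0}

/-- The leading coefficient (with respect to `∂`), in `Q_R(x)`. -/
def lc (P : A) : QX R := O.coeff P (O.ord P)

/-- The contraction ideal `cont(L) = Q_R(x)[∂]·L ∩ R[x][∂]`. -/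
def cont (L : A) : Set A := {P | O.InB P ∧ ∃ Q : A, P = Q * L}

/-- The `k`-th submodule `M_k(L) = {P ∈ cont(L) : deg_∂ P ≤ k}`. -/
def M (L : A) (k : ℕ) : Set A := {P | P ∈ O.cont L ∧ O.ord P ≤ k}

/-- The `k`-th coefficient ideal `I_k = {[∂^k]P : P ∈ M_k} ∪ {0}` (as a set of
polynomials; `0` arises from `P = 0`). -/
def Icoeff (L : A) (k : ℕ) : Set (Polynomial R) :=
  {f | ∃ P ∈ O.M L k, O.coeff P k = algebraMap (Polynomial R) (QX R) f}

end OreAlg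

/-- `gcd(p, w) = 1` in `R[x]`: every common divisor is a unit. -/
def Copr {R : Type} [CommRing R] (p w : Polynomial R) : Prop :=
  ∀ d : Polynomial R, d ∣ p → d ∣ w → IsUnit d

namespace OreAlg

variable {R : Type} [CommRing R] [IsDomain R] {A : Type} [Ring A] (O : OreAlg R A)

/-- `P` is a `p`-removing operator for `L` over `R[x]`, of order `k`:
`P·L ∈ R[x][∂]` and `σ^{-k}(lc_∂(P·L)) = (w/(v·p))·lc_∂(L)` with `gcd(p, w) = 1`. -/
def IsRemoving (L : A) (p : Polynomial R) (k : ℕ) (P : A) : Prop :=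
  O.ord P = k ∧ O.InB (P * L) ∧
  ∃ w v t l : Polynomial R, v ≠ 0 ∧ Copr p w ∧
    O.lc (P * L) = algebraMap (Polynomial R) (QX R) t ∧
    O.lc L = algebraMap (Polynomial R) (QX R) l ∧
    (⇑O.σ.symm)^[k] t * (v * p) = w * l

/-- `p` is removable from `L` (at some order). -/
def Removable (L : A) (p : Polynomial R) : Prop :=
  ∃ k P, O.IsRemoving L p k P

/-- Factorization data for `lc_∂(L) = c·p₁^{e₁}⋯p_m^{e_m}`, with `c ∈ R` and the
`pᵢ ∈ R[x] \ R` irreducible and pairwise coprime; `L` has order `r > 0`. -/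
def Factored (L : A) (r m : ℕ) (c : R) (p : Fin m → Polynomial R)
    (e : Fin m → ℕ) : Prop :=
  O.ord L = r ∧ 0 < r ∧ c ≠ 0 ∧
  O.lc L = algebraMap (Polynomial R) (QX R) (C c * ∏ i, p i ^ e i) ∧
  (∀ i, Irreducible (p i) ∧ 0 < (p i).natDegree) ∧
  (∀ i j, i ≠ j → Copr (p i) (p j))

/-- `T` is a desingularized operator for `L`: `T ∈ cont(L)` and
`σ^{r-k}(lc_∂(T)) = (a/(b·∏ pᵢ^{kᵢ}))·lc_∂(L)` with `a, b ∈ R`, where each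
`pᵢ^{dᵢ}` with `dᵢ > kᵢ` is non-removable from `L`. -/
def Desing (L : A) (r m : ℕ) (c : R) (p : Fin m → Polynomial R)
    (e : Fin m → ℕ) (T : A) : Prop :=
  T ∈ O.cont L ∧ r ≤ O.ord T ∧
  ∃ (a b : R) (k : Fin m → ℕ) (t l : Polynomial R),
    b ≠ 0 ∧ (∀ i, k i ≤ e i) ∧
    O.lc T = algebraMap (Polynomial R) (QX R) t ∧
    O.lc L = algebraMap (Polynomial R) (QX R) l ∧
    (⇑O.σ.symm)^[O.ord T - r] t * (C b * ∏ i, p i ^ k i) = C a * l ∧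
    (∀ i (d : ℕ), k i < d → ¬ O.Removable L (p i ^ d))

/-- The left ideal of `R[x][∂]` generated by a set `S ⊆ R[x][∂]`. -/
def LIdeal (S : Set A) : Set A :=
  {P | ∃ (n : ℕ) (co s : Fin n → A), (∀ i, O.InB (co i)) ∧ (∀ i, s i ∈ S) ∧
    P = ∑ i, co i * s i}

/-- The constant `a ∈ R` viewed inside the Ore algebra. -/
def cst (a : R) : A := O.ιp (C a)

/-- The saturation `I : a^∞ = {P ∈ R[x][∂] : aⁱ·P ∈ I for some i}`. -/
def sat (I : Set A) (a : R) : Set A :=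
  {P | O.InB P ∧ ∃ i : ℕ, O.cst a ^ i * P ∈ I}

end OreAlg

/-!
Write `lc(L) = c ∏ pᵢ^{eᵢ}`. The desingularization relation gives
`deg t ≤ Σ (eᵢ - kᵢ) deg pᵢ`. If `Q = S·L ∈ M_k(L)` has leading coefficient `q`, then
`σ^{-ord S}(q)` is divisible by every `pᵢ^{eᵢ-kᵢ}`: otherwise, writing it as `pᵢ^s·w` with
`pᵢ ∤ w` and `s < eᵢ - kᵢ`, the operator `S` removes `pᵢ^{eᵢ-s}` from `L`, although
`pᵢ^d` is non-removable for `d > kᵢ`. As the `pᵢ` are pairwise coprime, this gives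
`deg q ≥ Σ (eᵢ - kᵢ) deg pᵢ ≥ deg t`.
-/

namespace Polynomial

theorem ringEquiv_apply_eq_comp {R : Type} [CommRing R] {σ : R[X] ≃+* R[X]}
    (hσ : ∀ r, σ (C r) = C r) (f : R[X]) : σ f = f.comp (σ X) := by
  have h : (σ : R[X] →+* R[X]) = eval₂RingHom C (σ X) :=
    ringHom_ext (fun r => by simpa using hσ r) (by simp)
  exact DFunLike.congr_fun h f

variable {R : Type} [CommRing R] [IsDomain R]

theorem natDegree_ringEquiv_apply {σ : R[X] ≃+* R[X]} (hσ : ∀ r, σ (C r) = C r) (f : R[X]) :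
    (σ f).natDegree = f.natDegree := by
  have hX : (σ X).natDegree = 1 := by
    have h := congrArg natDegree (σ.apply_symm_apply X)
    rw [ringEquiv_apply_eq_comp hσ, natDegree_comp, natDegree_X] at h
    exact Nat.eq_one_of_mul_eq_one_left h
  rw [ringEquiv_apply_eq_comp hσ, natDegree_comp, hX, mul_one]

theorem natDegree_iterate_ringEquiv {σ : R[X] ≃+* R[X]} (hσ : ∀ r, σ (C r) = C r) (n : ℕ)
    (f : R[X]) : ((⇑σ)^[n] f).natDegree = f.natDegree := by
  induction n with
  | zero => rfl
  | succ n ih => rw [Function.iterate_succ_apply', natDegree_ringEquiv_apply hσ, ih]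

variable {ι : Type} [Fintype ι]

theorem natDegree_prod_pow {p : ι → R[X]} (hp : ∀ i, p i ≠ 0) (n : ι → ℕ) :
    (∏ i, p i ^ n i).natDegree = ∑ i, n i * (p i).natDegree := by
  rw [natDegree_prod _ _ fun i _ => pow_ne_zero _ (hp i)]
  simp only [natDegree_pow]

theorem natDegree_le_sum_of_mul_prod_pow_eq {t : R[X]} {a b c : R} {p : ι → R[X]}
    {k e : ι → ℕ} (ht : t ≠ 0) (hb : b ≠ 0) (hp : ∀ i, p i ≠ 0) (hke : ∀ i, k i ≤ e i)
    (h : t * (C b * ∏ i, p i ^ k i) = C a * (C c * ∏ i, p i ^ e i)) :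
    t.natDegree ≤ ∑ i, (e i - k i) * (p i).natDegree := by
  have hdeg : t.natDegree + ∑ i, k i * (p i).natDegree ≤ ∑ i, e i * (p i).natDegree := by
    calc t.natDegree + ∑ i, k i * (p i).natDegree
        = (t * (C b * ∏ i, p i ^ k i)).natDegree := by
          rw [natDegree_mul ht (mul_ne_zero (C_ne_zero.mpr hb)
            (Finset.prod_ne_zero_iff.mpr fun i _ => pow_ne_zero _ (hp i))),
            natDegree_C_mul hb, natDegree_prod_pow hp]
      _ ≤ (∏ i, p i ^ e i).natDegree := by
          rw [h]
          exact natDegree_C_mul_le _ _ |>.trans (natDegree_C_mul_le _ _)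
      _ = ∑ i, e i * (p i).natDegree := natDegree_prod_pow hp e
  have hsplit : ∑ i, e i * (p i).natDegree
      = ∑ i, (e i - k i) * (p i).natDegree + ∑ i, k i * (p i).natDegree := by
    rw [← Finset.sum_add_distrib]
    exact Finset.sum_congr rfl fun i _ => by rw [← add_mul, Nat.sub_add_cancel (hke i)]
  omega

theorem sum_mul_natDegree_le_of_pow_dvd [DecompositionMonoid R[X]] {p : ι → R[X]}
    (hcop : Pairwise fun i j => IsRelPrime (p i) (p j)) (hp : ∀ i, p i ≠ 0) {n : ι → ℕ}
    {q : R[X]} (hq : q ≠ 0) (hdvd : ∀ i, p i ^ n i ∣ q) :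
    ∑ i, n i * (p i).natDegree ≤ q.natDegree := by
  rw [← natDegree_prod_pow hp]
  exact natDegree_le_of_dvd
    (Fintype.prod_dvd_of_isRelPrime (fun i j hij => (hcop hij).pow) hdvd) hq

end Polynomial

namespace OreAlg

variable {R : Type} [CommRing R] [IsDomain R] {A : Type} [Ring A] (O : OreAlg R A)

theorem coeff_zero (i : ℕ) : O.coeff 0 i = 0 := by
  simpa using O.coeff_smul 0 0 i

theorem lc_ne_zero {P : A} (hP : P ≠ 0) : O.lc P ≠ 0 := by
  have hne : ∃ i, O.coeff P i ≠ 0 := by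
    by_contra! h
    exact hP (O.coeff_inj P 0 fun i => (h i).trans (O.coeff_zero i).symm)
  obtain ⟨N, hN⟩ := O.coeff_bdd P
  exact Nat.sSup_mem hne ⟨N, fun i hi => not_lt.mp fun hlt => hi (hN i hlt)⟩

theorem iterate_symm_ne_zero_of_lc_eq {P : A} (hP : P ≠ 0) {f : R[X]}
    (hf : O.lc P = algebraMap R[X] (QX R) f) (n : ℕ) : (⇑O.σ.symm)^[n] f ≠ 0 :=
  (O.σ.symm.injective.iterate n).ne_iff' (iterate_map_zero _ n) |>.mpr
    fun h => O.lc_ne_zero hP (by rw [hf, h, map_zero])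

theorem symm_C (r : R) : O.σ.symm (C r) = C r :=
  O.σ.symm_apply_eq.mpr (O.σ_fix r).symm

theorem exists_removable_pow_of_not_pow_dvd [DecompositionMonoid R[X]] {L S : A}
    {p q l u : R[X]} {n k : ℕ}
    (hp : Irreducible p) (hu : u ≠ 0) (hSL : O.InB (S * L))
    (hq : O.lc (S * L) = algebraMap R[X] (QX R) q) (hl : O.lc L = algebraMap R[X] (QX R) l)
    (hlpu : l = p ^ n * u) (hndvd : ¬ p ^ (n - k) ∣ (⇑O.σ.symm)^[O.ord S] q) :
    ∃ d, k < d ∧ O.Removable L (p ^ d) := by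
  set q' := (⇑O.σ.symm)^[O.ord S] q
  obtain ⟨N, hN⟩ : ∃ N, n - k = N + 1 :=
    Nat.exists_eq_add_one.mpr (Nat.pos_of_ne_zero fun h => hndvd (by simp [h]))
  have hfin : FiniteMultiplicity p q' := ⟨N, hN ▸ hndvd⟩
  obtain ⟨w, hw, hpw⟩ := hfin.exists_eq_pow_mul_and_not_dvd
  set s := multiplicity p q'
  have hs : s < n - k := lt_of_not_ge fun h => hndvd ((pow_dvd_pow p h).trans ⟨w, hw⟩)
  have hcop : IsRelPrime (p ^ (n - s)) w := (hp.isRelPrime_iff_not_dvd.mpr hpw).pow_left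
  refine ⟨n - s, by omega, O.ord S, S, rfl, hSL, w, u, q, l, hu, fun d => @hcop d, hq, hl, ?_⟩
  calc q' * (u * p ^ (n - s)) = w * (p ^ s * p ^ (n - s) * u) := by rw [hw]; ring
    _ = w * l := by rw [pow_mul_pow_sub p (by omega), hlpu]

end OreAlg

theorem desing_minimal_degree_general {R : Type} [CommRing R] [IsDomain R]
    [IsPrincipalIdealRing R] {A : Type} [Ring A] (O : OreAlg R A)
    (L : A)
    (r m : ℕ) (c : R) (p : Fin m → Polynomial R) (e : Fin m → ℕ)
    (hF : O.Factored L r m c p e)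
    (T : A) (hT : O.Desing L r m c p e T) (hT0 : T ≠ 0)
    (k : ℕ) (hk : O.ord T = k)
    (t : Polynomial R) (ht : O.lc T = algebraMap (Polynomial R) (QX R) t) :
    IsLeast {n : ℕ | ∃ Q ∈ O.M L k, Q ≠ 0 ∧
        ∃ q : Polynomial R, O.lc Q = algebraMap (Polynomial R) (QX R) q ∧
          q.natDegree = n}
      t.natDegree := by
  obtain ⟨-, -, hc, hlcL, hirr, hcop⟩ := hF
  obtain ⟨hTc, -, a, b, kT, t', l, hb, hke, ht', hl, heq, hnrem⟩ := hT
  have hinj := IsFractionRing.injective R[X] (QX R)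
  obtain rfl : t = t' := hinj (ht.symm.trans ht')
  obtain rfl : l = C c * ∏ i, p i ^ e i := hinj (hl.symm.trans hlcL)
  have hp (i : Fin m) : p i ≠ 0 := (hirr i).1.ne_zero
  refine ⟨⟨T, ⟨hTc, hk.le⟩, hT0, t, ht, rfl⟩, ?_⟩
  rintro _ ⟨Q, ⟨⟨hQB, S, rfl⟩, -⟩, hQ, q, hq, rfl⟩
  have hdvd (i : Fin m) : p i ^ (e i - kT i) ∣ (⇑O.σ.symm)^[O.ord S] q := by
    by_contra hndvd
    have hu : C c * ∏ j ∈ Finset.univ.erase i, p j ^ e j ≠ 0 :=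
      mul_ne_zero (C_ne_zero.mpr hc)
        (Finset.prod_ne_zero_iff.mpr fun j _ => pow_ne_zero _ (hp j))
    obtain ⟨d, hd, hrem⟩ := O.exists_removable_pow_of_not_pow_dvd (hirr i).1 hu hQB hq hlcL
      (by rw [← Finset.mul_prod_erase _ _ (Finset.mem_univ i)]; ring) hndvd
    exact hnrem i d hd hrem
  calc t.natDegree = ((⇑O.σ.symm)^[O.ord T - r] t).natDegree :=
        (natDegree_iterate_ringEquiv O.symm_C _ t).symm
    _ ≤ ∑ i, (e i - kT i) * (p i).natDegree :=
        natDegree_le_sum_of_mul_prod_pow_eq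
          (O.iterate_symm_ne_zero_of_lc_eq hT0 ht _) hb hp hke heq
    _ ≤ ((⇑O.σ.symm)^[O.ord S] q).natDegree :=
        sum_mul_natDegree_le_of_pow_dvd (fun i j hij d => hcop i j hij d) hp
          (O.iterate_symm_ne_zero_of_lc_eq hQ hq _) hdvd
    _ = q.natDegree := natDegree_iterate_ringEquiv O.symm_C _ q

/-- a desingularized operator `T` of order `k ≥ r` has leading
coefficient of minimal `x`-degree among nonzero operators in `M_k(L)`. -/
theorem desing_minimal_degree {R : Type} [CommRing R] [IsDomain R]
    [IsPrincipalIdealRing R] {A : Type} [Ring A] (O : OreAlg R A)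
    (L : A) (hL : L ≠ 0) (hLB : O.InB L)
    (r m : ℕ) (c : R) (p : Fin m → Polynomial R) (e : Fin m → ℕ)
    (hF : O.Factored L r m c p e)
    (T : A) (hT : O.Desing L r m c p e T) (hT0 : T ≠ 0)
    (k : ℕ) (hk : O.ord T = k) (hkr : r ≤ k)
    (t : Polynomial R) (ht : O.lc T = algebraMap (Polynomial R) (QX R) t) :
    IsLeast {n : ℕ | ∃ Q ∈ O.M L k, Q ≠ 0 ∧
        ∃ q : Polynomial R, O.lc Q = algebraMap (Polynomial R) (QX R) q ∧
          q.natDegree = n}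
      t.natDegree :=
  desing_minimal_degree_general O L r m c p e hF T hT hT0 k hk t ht
end
end

section
/- If the k-th submodule M_k of cont(L) has R[x]-basis {B_1, …, B_ℓ}, then the k-th coefficient ideal I_k = { [∂^k]P : P ∈ M_k } ∪ {0} is generated as an ideal of R[x] by the coefficients [∂^k]B_1, …, [∂^k]B_ℓ. -/
open Polynomial

noncomputable section

namespace OreAlg

variable {R : Type} [CommRing R] [IsDomain R] {A : Type} [Ring A] (O : OreAlg R A)

lemma coeff_sum {ι : Type*} (s : Finset ι) (P : ι → A) (i : ℕ) :
    O.coeff (∑ j ∈ s, P j) i = ∑ j ∈ s, O.coeff (P j) i :=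
  map_sum (AddMonoidHom.mk' (O.coeff · i) fun P Q => O.coeff_add P Q i) P s

lemma coeff_ιp_mul (f : Polynomial R) (P : A) (i : ℕ) :
    O.coeff (O.ιp f * P) i = algebraMap (Polynomial R) (QX R) f * O.coeff P i :=
  O.coeff_smul _ P i

lemma ord_le_of_coeff_eq_zero {P : A} {k : ℕ} (h : ∀ i, k < i → O.coeff P i = 0) :
    O.ord P ≤ k := by
  rcases Set.eq_empty_or_nonempty {i | O.coeff P i ≠ 0} with he | hne
  · simp only [ord, he, csSup_empty, bot_eq_zero, zero_le]
  · exact csSup_le hne fun i hi => not_lt.mp fun hki => hi (h i hki)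

lemma coeff_eq_zero_of_ord_lt {P : A} {i : ℕ} (hi : O.ord P < i) : O.coeff P i = 0 := by
  by_contra hne
  obtain ⟨N, hN⟩ := O.coeff_bdd P
  have hbdd : BddAbove {j | O.coeff P j ≠ 0} :=
    ⟨N, fun j hj => not_lt.mp fun hNj => hj (hN j hNj)⟩
  exact absurd (le_csSup hbdd hne) (not_le.mpr hi)

variable {ι : Type*} (s : Finset ι) (h : ι → Polynomial R) {B : ι → A}

lemma coeff_sum_ιp_mul (k : ℕ) {b : ι → Polynomial R}
    (hb : ∀ i, O.coeff (B i) k = algebraMap (Polynomial R) (QX R) (b i)) :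
    O.coeff (∑ i ∈ s, O.ιp (h i) * B i) k
      = algebraMap (Polynomial R) (QX R) (∑ i ∈ s, h i * b i) := by
  simp only [O.coeff_sum, O.coeff_ιp_mul, hb, map_sum, map_mul]

lemma InB.sum_ιp_mul (hB : ∀ i, O.InB (B i)) : O.InB (∑ i ∈ s, O.ιp (h i) * B i) := by
  intro k
  choose b hb using fun i => hB i k
  exact ⟨_, O.coeff_sum_ιp_mul s h k hb⟩

lemma ord_sum_ιp_mul_le {k : ℕ} (hB : ∀ i, O.ord (B i) ≤ k) :
    O.ord (∑ i ∈ s, O.ιp (h i) * B i) ≤ k :=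
  O.ord_le_of_coeff_eq_zero fun i hki => by
    simp only [O.coeff_sum, O.coeff_ιp_mul,
      O.coeff_eq_zero_of_ord_lt ((hB _).trans_lt hki), mul_zero, Finset.sum_const_zero]

lemma sum_ιp_mul_mem_cont {L : A} (hB : ∀ i, B i ∈ O.cont L) :
    ∑ i ∈ s, O.ιp (h i) * B i ∈ O.cont L := by
  choose hBB Q hQ using hB
  refine ⟨InB.sum_ιp_mul O s h hBB, ∑ i ∈ s, O.ιp (h i) * Q i, ?_⟩
  simp only [Finset.sum_mul, hQ, mul_assoc]

lemma sum_ιp_mul_mem_M {L : A} {k : ℕ} (hB : ∀ i, B i ∈ O.M L k) :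
    ∑ i ∈ s, O.ιp (h i) * B i ∈ O.M L k :=
  ⟨O.sum_ιp_mul_mem_cont s h fun i => (hB i).1, O.ord_sum_ιp_mul_le s h fun i => (hB i).2⟩

end OreAlg

theorem coeff_ideal_generated_by_basis_general {R : Type} [CommRing R] [IsDomain R]
    {A : Type} [Ring A] (O : OreAlg R A)
    (L : A)
    (k l : ℕ) (B : Fin l → A)
    (hBmem : ∀ i, B i ∈ O.M L k)
    (hspan : ∀ P ∈ O.M L k, ∃ h : Fin l → Polynomial R,
      P = ∑ i, O.ιp (h i) * B i)
    (b : Fin l → Polynomial R)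
    (hb : ∀ i, O.coeff (B i) k = algebraMap (Polynomial R) (QX R) (b i)) :
    O.Icoeff L k = {f : Polynomial R | ∃ h : Fin l → Polynomial R, f = ∑ i, h i * b i} := by
  ext f
  constructor
  · rintro ⟨P, hPM, hPf⟩
    obtain ⟨h, rfl⟩ := hspan P hPM
    refine ⟨h, IsFractionRing.injective (Polynomial R) (QX R) ?_⟩
    rw [← hPf, O.coeff_sum_ιp_mul _ h k hb]
  · rintro ⟨h, rfl⟩
    exact ⟨_, O.sum_ιp_mul_mem_M _ h hBmem, O.coeff_sum_ιp_mul _ h k hb⟩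

/-- if `M_k` has an `R[x]`-basis `B₁, …, B_ℓ`, then the `k`-th
coefficient ideal `I_k` is generated by `[∂^k]B₁, …, [∂^k]B_ℓ`. -/
theorem coeff_ideal_generated_by_basis {R : Type} [CommRing R] [IsDomain R]
    [IsPrincipalIdealRing R] {A : Type} [Ring A] (O : OreAlg R A)
    (L : A) (hL : L ≠ 0) (hLB : O.InB L) (hr : 0 < O.ord L)
    (k l : ℕ) (B : Fin l → A)
    (hBmem : ∀ i, B i ∈ O.M L k)
    (hspan : ∀ P ∈ O.M L k, ∃ h : Fin l → Polynomial R,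
      P = ∑ i, O.ιp (h i) * B i)
    (hindep : ∀ h : Fin l → Polynomial R,
      (∑ i, O.ιp (h i) * B i) = 0 → ∀ i, h i = 0)
    (b : Fin l → Polynomial R)
    (hb : ∀ i, O.coeff (B i) k = algebraMap (Polynomial R) (QX R) (b i)) :
    O.Icoeff L k = {f : Polynomial R | ∃ h : Fin l → Polynomial R, f = ∑ i, h i * b i} :=
  coeff_ideal_generated_by_basis_general O L k l B hBmem hspan b hb
end
end

section
/- Let I be a left ideal of R[x][∂] and c a nonzero element of R. Let J be the left ideal of R[x,y][∂] generated by I ∪ {1 − cy}, where y is a new central indeterminate commuting with every element of R[x][∂]. Then I : c^∞ = J ∩ R[x][∂]. -/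
open Polynomial

noncomputable section

/-!
Since `y` is central, the hypotheses `hgen` and `huniq` say that evaluation at `y` is an
isomorphism `B[X] ≃+* B'`, so the question lives in `B[X]`. There `c ^ i * P ∈ I` gives
`C P = X ^ i * C (c ^ i * P) + C P * (∑_{k < i} (c X) ^ k) * (1 - c X)`. Conversely, if
`C P = u + r * (1 - c X)` with all coefficients of `u` in `I`, apply `p ↦ c ^ N p(1/c)`,
realised as evaluating the reversal `reflect N p` at `c`: for `N > deg r` it turns
`r * (1 - c X)` into a multiple of `X - c` and kills it, it sends `u` into `I` because `c`
is central, and it sends `C P` to `c ^ N * P`.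
-/

namespace Polynomial

variable {B : Type*} [Ring B]

theorem coeff_mem_of_mem_span_C_image {I : Ideal B} {p : B[X]}
    (hp : p ∈ Ideal.span (C '' (I : Set B))) : ∀ k, p.coeff k ∈ I := by
  induction hp using Submodule.span_induction with
  | mem q hq =>
    obtain ⟨a, ha, rfl⟩ := hq
    intro k
    rw [coeff_C]
    split_ifs
    exacts [ha, I.zero_mem]
  | zero => simp
  | add q r _ _ hq hr => exact fun k => by simpa using I.add_mem (hq k) (hr k)
  | smul q r _ hr =>
    intro k
    rw [smul_eq_mul, coeff_mul]
    exact I.sum_mem fun x _ => I.mul_mem_left _ (hr x.2)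

theorem eval_mem_of_coeff_mem {c : B} (hc : ∀ b, Commute c b) {I : Ideal B} {p : B[X]}
    (hp : ∀ k, p.coeff k ∈ I) : p.eval c ∈ I := by
  rw [eval_eq_sum_range]
  exact I.sum_mem fun k _ => ((hc _).pow_left k).eq ▸ I.mul_mem_left _ (hp k)

theorem reflect_one_sub_C_mul_X (c : B) : reflect 1 (1 - C c * X) = X - C c := by
  rw [reflect_sub, ← C_1, reflect_C, ← pow_one X, reflect_C_mul_X_pow]
  simp

theorem eval_reflect_mul_one_sub_C_mul_X (c : B) {p : B[X]} {N : ℕ} (hN : p.natDegree < N) :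
    (reflect N (p * (1 - C c * X))).eval c = 0 := by
  obtain ⟨M, rfl⟩ := Nat.exists_eq_add_of_lt hN
  have hdeg : (1 - C c * X).natDegree ≤ 1 := by compute_degree
  rw [reflect_mul _ _ (Nat.le_add_right _ M) hdeg, reflect_one_sub_C_mul_X, eval_mul_X_sub_C]

theorem C_mem_span_C_image_union_one_sub_C_mul_X_iff {c : B} (hc : ∀ b, Commute c b)
    (I : Ideal B) (P : B) :
    C P ∈ Ideal.span (C '' (I : Set B) ∪ {1 - C c * X}) ↔ ∃ i, c ^ i * P ∈ I := by
  rw [Ideal.span_union, Submodule.mem_sup]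
  constructor
  · rintro ⟨u, hu, v, hv, huv⟩
    obtain ⟨r, rfl⟩ := Ideal.mem_span_singleton'.mp hv
    refine ⟨r.natDegree + 1, ?_⟩
    have h := congrArg (fun p => (reflect (r.natDegree + 1) p).eval c) huv
    simp only [reflect_add, eval_add, eval_reflect_mul_one_sub_C_mul_X c (Nat.lt_succ_self _),
      add_zero, reflect_C, eval_C_mul, eval_X_pow] at h
    rw [((hc P).pow_left _).eq, ← h]
    refine eval_mem_of_coeff_mem hc fun k => ?_
    rw [coeff_reflect]
    exact coeff_mem_of_mem_span_C_image hu _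
  · rintro ⟨i, hi⟩
    refine ⟨X ^ i * C (c ^ i * P), Ideal.mul_mem_left _ _ (Ideal.subset_span ⟨_, hi, rfl⟩),
      C P * (∑ k ∈ Finset.range i, (C c * X) ^ k) * (1 - C c * X),
      Ideal.mul_mem_left _ _ (Ideal.subset_span rfl), ?_⟩
    have hpow : C P * (C c * X) ^ i = X ^ i * C (c ^ i * P) := by
      rw [(commute_X (C c)).symm.mul_pow, ← C_pow, ← mul_assoc, ← C_mul,
        ← ((hc P).pow_left _).eq, commute_X_pow]
    rw [mul_assoc, geom_sum_mul_neg, mul_sub, mul_one, hpow]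
    abel

theorem bijective_eval₂RingHom'_of_unique_repr {B' : Type*} [Ring B'] (j : B →+* B') (y : B')
    (hy : ∀ b, Commute (j b) y)
    (hgen : ∀ q : B', ∃ (n : ℕ) (b : ℕ → B),
      q = ∑ i ∈ Finset.range (n + 1), j (b i) * y ^ i)
    (huniq : ∀ (n : ℕ) (b : ℕ → B),
      (∑ i ∈ Finset.range (n + 1), j (b i) * y ^ i) = 0 → ∀ i ≤ n, b i = 0) :
    Function.Bijective (eval₂RingHom' j y hy) := by
  have heval : ∀ (n : ℕ) (b : ℕ → B), eval₂RingHom' j y hy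
      (∑ i ∈ Finset.range (n + 1), C (b i) * X ^ i) =
        ∑ i ∈ Finset.range (n + 1), j (b i) * y ^ i := by
    simp only [map_sum, map_mul, map_pow]
    simp
  refine ⟨(injective_iff_map_eq_zero _).mpr fun p hp => ?_, fun q => ?_⟩
  · rw [as_sum_range_C_mul_X_pow p, heval] at hp
    ext k
    rcases le_or_gt k p.natDegree with hk | hk
    · exact huniq _ _ hp k hk
    · exact coeff_eq_zero_of_natDegree_lt hk
  · obtain ⟨n, b, rfl⟩ := hgen q
    exact ⟨_, heval n b⟩

end Polynomial

theorem Ideal.mem_span_iff_exists_fin_sum_mul {R : Type*} [Semiring R] {S : Set R} {x : R} :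
    x ∈ Ideal.span S ↔ ∃ (n : ℕ) (co s : Fin n → R), (∀ i, s i ∈ S) ∧ x = ∑ i, co i * s i := by
  rw [Ideal.span, Submodule.mem_span_set']
  constructor
  · rintro ⟨n, co, s, rfl⟩
    exact ⟨n, co, fun i => s i, fun i => (s i).2, rfl⟩
  · rintro ⟨n, co, s, hs, rfl⟩
    exact ⟨n, co, fun i => ⟨s i, hs i⟩, rfl⟩

/-- `B` plays the role of `R[x][∂]` and `B'` that of `R[x,y][∂] = B[y]`, embedded via `j`. -/
theorem saturation_via_new_variable_general {B B' : Type} [Ring B] [Ring B']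
    (j : B →+* B')
    (y : B') (hy : ∀ q : B', y * q = q * y)
    (c : B) (hc : ∀ b : B, c * b = b * c)
    (hgen : ∀ q : B', ∃ (n : ℕ) (b : ℕ → B),
      q = ∑ i ∈ Finset.range (n + 1), j (b i) * y ^ i)
    (huniq : ∀ (n : ℕ) (b : ℕ → B),
      (∑ i ∈ Finset.range (n + 1), j (b i) * y ^ i) = 0 → ∀ i ≤ n, b i = 0)
    (I : Set B) (hI0 : (0 : B) ∈ I)
    (hIadd : ∀ a b : B, a ∈ I → b ∈ I → a + b ∈ I)
    (hImul : ∀ b a : B, a ∈ I → b * a ∈ I) :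
    {P : B | ∃ i : ℕ, c ^ i * P ∈ I}
      = j ⁻¹' {q : B' | ∃ (n : ℕ) (co s : Fin n → B'),
          (∀ i, s i ∈ j '' I ∪ {1 - j c * y}) ∧ q = ∑ i, co i * s i} := by
  let I' : Ideal B :=
    { carrier := I, add_mem' := hIadd _ _, zero_mem' := hI0, smul_mem' := hImul }
  let φ : B[X] ≃+* B' := RingEquiv.ofBijective _
    (bijective_eval₂RingHom'_of_unique_repr j y (fun b => (hy (j b)).symm) hgen huniq)
  have hφC : ∀ a, φ (C a) = j a := fun _ => eval₂_C j y
  have hφX : φ X = y := eval₂_X j y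
  have hgens : j '' I ∪ {1 - j c * y} = φ '' (C '' (I' : Set B) ∪ {1 - C c * X}) := by
    rw [Set.image_union, Set.image_image, Set.image_singleton, map_sub, map_one, map_mul, hφC, hφX]
    simp only [hφC]
    rfl
  ext P
  rw [Set.mem_preimage, Set.mem_ofPred_eq, Set.mem_ofPred_eq,
    ← Ideal.mem_span_iff_exists_fin_sum_mul, hgens, ← Ideal.map_span,
    ← Ideal.symm_apply_mem_of_equiv_iff, ← hφC, φ.symm_apply_apply,
    C_mem_span_C_image_union_one_sub_C_mul_X_iff hc]
  rfl

/-- let `B` play the role of `R[x][∂]` and `B'` the role of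
`R[x,y][∂]`, with `y` a central indeterminate: `B' = B[y]` via `j`, with unique
polynomial representation in `y`.  For a central regular constant `c` (a nonzero
element of the domain `R`) and a left ideal `I` of `B`, the saturation
`I : c^∞` equals `J ∩ B`, where `J` is the left ideal of `B'` generated by
`I ∪ {1 - c·y}`. -/
theorem saturation_via_new_variable {B B' : Type} [Ring B] [Ring B']
    (j : B →+* B') (hj : Function.Injective j)
    (y : B') (hy : ∀ q : B', y * q = q * y)
    (c : B) (hc : ∀ b : B, c * b = b * c)
    (hreg : ∀ b : B, c * b = 0 → b = 0)
    (hgen : ∀ q : B', ∃ (n : ℕ) (b : ℕ → B),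
      q = ∑ i ∈ Finset.range (n + 1), j (b i) * y ^ i)
    (huniq : ∀ (n : ℕ) (b : ℕ → B),
      (∑ i ∈ Finset.range (n + 1), j (b i) * y ^ i) = 0 → ∀ i ≤ n, b i = 0)
    (I : Set B) (hI0 : (0 : B) ∈ I)
    (hIadd : ∀ a b : B, a ∈ I → b ∈ I → a + b ∈ I)
    (hImul : ∀ b a : B, a ∈ I → b * a ∈ I) :
    {P : B | ∃ i : ℕ, c ^ i * P ∈ I}
      = j ⁻¹' {q : B' | ∃ (n : ℕ) (co s : Fin n → B'),
          (∀ i, s i ∈ j '' I ∪ {1 - j c * y}) ∧ q = ∑ i, co i * s i} :=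
  saturation_via_new_variable_general j y hy c hc hgen huniq I hI0 hIadd hImul
end
end
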